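/- Let k be a commutative ring and G a finite group whose order |G| is invertible in k. Suppose G acts on the polynomial ring k[x₁, …, x_n] = MvPolynomial (Fin n) k by k-algebra automorphisms preserving each homogeneous component (equivalently, each g ∈ G sends every variable to a homogeneous linear form). Let I be a G-stable ideal of k[x₁, …, x_n] and B := k[x₁, …, x_n]/I with the induced G-action. Then: (1) the fixed subalgebra B^G is a finitely generated k-algebra; and (2) for every B-module P which is finitely generated over B and is equipped with an additive G-action satisfying g • (b · p) = (g • b) · (g • p) for all g ∈ G, b ∈ B, p ∈ P, the fixed submodule P^G = {p ∈ P : ∀ g ∈ G, g • p = p} is a finitely generated module over B^G. -/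

import Mathlib

/-- The fixed subalgebra `Sᴳ` of a group `G` acting on an `R`-algebra `S` by `R`-algebra
automorphisms (the action being given by `ρ : G →* (S ≃ₐ[R] S)`). -/
def fixedSubalgebra (R S : Type*) [CommSemiring R] [Semiring S] [Algebra R S]
    {G : Type*} [Monoid G] (ρ : G →* (S ≃ₐ[R] S)) : Subalgebra R S where
  carrier := {a | ∀ g : G, ρ g a = a}
  mul_mem' := fun {a b} ha hb g => by rw [map_mul, ha g, hb g]
  add_mem' := fun {a b} ha hb g => by rw [map_add, ha g, hb g]
  algebraMap_mem' := fun r g => (ρ g).commutes r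

/-- The automorphism group structure that `P ≃+ P` carried in the older Mathlib
(`f * g = g.trans f`, `1 = refl`, `f⁻¹ = f.symm`), now only available additively on `AddAut P`. -/
instance addEquivSelfGroup (P : Type*) [Add P] : Group (P ≃+ P) :=
  inferInstanceAs (Group (Multiplicative (AddAut P)))

/-- The fixed submodule `Pᴳ` of a `G`-action on a `B`-module `P` (additive, and compatible
with a `G`-action on `B`), as a module over the fixed subalgebra `Bᴳ`. -/
def fixedSubmodule {k B : Type*} [CommRing k] [CommRing B] [Algebra k B]
    {G : Type*} [Monoid G] (ρB : G →* (B ≃ₐ[k] B))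
    {P : Type*} [AddCommGroup P] [Module B P]
    (ρP : G →* (P ≃+ P))
    (hP : ∀ (g : G) (b : B) (p : P), ρP g (b • p) = (ρB g b) • (ρP g p)) :
    Submodule (fixedSubalgebra k B ρB) P where
  carrier := {p | ∀ g : G, ρP g p = p}
  add_mem' := fun {a b} ha hb g => by rw [map_add, ha g, hb g]
  zero_mem' := fun g => map_zero _
  smul_mem' := by
    rintro ⟨b, hb⟩ p hp g
    show ρP g (b • p) = b • p
    rw [hP g b p, hb g, hp g]

/-!
Every `b ∈ B` is a root of the monic polynomial `∏_g (X - g • b)` with coefficients in `Bᴳ`, so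
`B` is integral, hence module-finite, over `Bᴳ`. The first half of the Artin–Tate argument then
gives a finitely generated `k`-subalgebra `B₀ ⊆ Bᴳ` over which `B` is finite. Since `|G|` is
invertible, the averaging operator `|G|⁻¹ ∑_g g` is a `Bᴳ`-linear retraction `B → Bᴳ`; it replaces
the Noetherian hypothesis of Artin–Tate: `Bᴳ` is a quotient of the finite `B₀`-module `B`, hence
a finitely generated `k`-algebra. Likewise `Pᴳ` is the image of the averaging operator on `P`,
which is finite over `Bᴳ` because `B` is.
-/

theorem Algebra.FiniteType.of_retraction {A B C : Type*} [CommRing A] [CommRing B] [CommRing C]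
    [Algebra A B] [Algebra B C] [Algebra A C] [IsScalarTower A B C]
    [Algebra.FiniteType A C] [Module.Finite B C]
    (r : C →ₗ[B] B) (hr : ∀ b, r (algebraMap B C b) = b) : Algebra.FiniteType A B := by
  obtain ⟨B₀, hB₀, hB₀C⟩ :=
    exists_subalgebra_of_fg A B C Algebra.FiniteType.out Module.Finite.fg_top
  have : Module.Finite B₀ C := ⟨hB₀C⟩
  have : Module.Finite B₀ B :=
    Module.Finite.of_surjective (r.restrictScalars B₀) (Function.LeftInverse.surjective hr)
  exact ⟨Algebra.fg_trans' (B₀.fg_top.2 hB₀) (Subalgebra.fg_of_submodule_fg Module.Finite.fg_top)⟩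

theorem Representation.finite_invariants {A G M : Type*} [CommRing A] [Group G] [Fintype G]
    [AddCommGroup M] [Module A M] (ρ : Representation A G M) [Invertible (Fintype.card G : A)]
    [Module.Finite A M] : Module.Finite A ρ.invariants := by
  rw [← ρ.isProj_averageMap.range]
  infer_instance

theorem IsUnit.natCast_of_algebra {R S : Type*} [CommSemiring R] [Semiring S] [Algebra R S]
    {n : ℕ} (h : IsUnit (n : R)) : IsUnit (n : S) := by
  simpa using h.map (algebraMap R S)

section FixedPoints

variable {k B : Type*} [CommRing k] [CommRing B] [Algebra k B] {G : Type*} [Group G]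
  (ρB : G →* (B ≃ₐ[k] B))

theorem isIntegral_over_fixedSubalgebra [Finite G] : Algebra.IsIntegral (fixedSubalgebra k B ρB) B := by
  let := MulSemiringAction.compHom B ρB
  have : Algebra.IsInvariant (fixedSubalgebra k B ρB) B G := ⟨fun b hb => ⟨⟨b, hb⟩, rfl⟩⟩
  exact Algebra.IsInvariant.isIntegral _ B G

theorem finite_over_fixedSubalgebra [Finite G] [Algebra.FiniteType k B] :
    Module.Finite (fixedSubalgebra k B ρB) B :=
  have := isIntegral_over_fixedSubalgebra ρB
  have := Algebra.FiniteType.of_restrictScalars_finiteType k (fixedSubalgebra k B ρB) B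
  Algebra.IsIntegral.finite

variable {P : Type*} [AddCommGroup P] [Module B P] (ρP : G →* (P ≃+ P))
  (hP : ∀ (g : G) (b : B) (p : P), ρP g (b • p) = (ρB g b) • (ρP g p))

def fixedSubalgebraRepresentation : Representation (fixedSubalgebra k B ρB) G P where
  toFun g :=
    { toFun := ρP g
      map_add' := map_add (ρP g)
      map_smul' := fun a p => by
        simp only [Subalgebra.smul_def, hP, RingHom.id_apply]
        rw [a.2 g] }
  map_one' := by ext p; exact DFunLike.congr_fun (map_one ρP) p
  map_mul' g h := by ext p; exact DFunLike.congr_fun (map_mul ρP g h) p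

theorem invariants_fixedSubalgebraRepresentation :
    (fixedSubalgebraRepresentation ρB ρP hP).invariants = fixedSubmodule ρB ρP hP := rfl

variable [Fintype G] (hG : IsUnit ((Fintype.card G : ℕ) : k)) [Algebra.FiniteType k B]
include hG

theorem finiteType_fixedSubalgebra : Algebra.FiniteType k (fixedSubalgebra k B ρB) := by
  have : Invertible (Fintype.card G : fixedSubalgebra k B ρB) := hG.natCast_of_algebra.invertible
  have := finite_over_fixedSubalgebra ρB
  let ρ : G →* (B ≃+ B) :=
    { toFun g := (ρB g).toAddEquiv
      map_one' := by ext; simp; rfl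
      map_mul' g h := by ext; simp [map_mul ρB]; rfl }
  let σ := fixedSubalgebraRepresentation ρB ρ (fun g => map_mul (ρB g))
  exact Algebra.FiniteType.of_retraction (C := B)
    { toFun b := ⟨σ.averageMap b, σ.averageMap_invariant b⟩
      map_add' x y := Subtype.ext (map_add _ x y)
      map_smul' a x := Subtype.ext (map_smul _ a x) }
    fun b => Subtype.ext (σ.averageMap_id b b.2)

theorem finite_fixedSubmodule [Module.Finite B P] :
    Module.Finite (fixedSubalgebra k B ρB) (fixedSubmodule ρB ρP hP) := by
  have : Invertible (Fintype.card G : fixedSubalgebra k B ρB) := hG.natCast_of_algebra.invertible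
  have := finite_over_fixedSubalgebra ρB
  have : Module.Finite (fixedSubalgebra k B ρB) P := .trans B P
  rw [← invariants_fixedSubalgebraRepresentation ρB ρP hP]
  exact Representation.finite_invariants _

end FixedPoints

universe u

theorem stmt4_general (k : Type u) [CommRing k]
    (G : Type u) [Group G] [Fintype G]
    (hG : IsUnit ((Fintype.card G : ℕ) : k))
    (n : ℕ)
    (I : Ideal (MvPolynomial (Fin n) k))
    -- the induced action on `B = k[x₁,…,xₙ]/I`
    (ρB : G →* ((MvPolynomial (Fin n) k ⧸ I) ≃ₐ[k] (MvPolynomial (Fin n) k ⧸ I))) :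
    Algebra.FiniteType k (fixedSubalgebra k (MvPolynomial (Fin n) k ⧸ I) ρB) ∧
    ∀ (P : Type u) [AddCommGroup P] [Module (MvPolynomial (Fin n) k ⧸ I) P],
      Module.Finite (MvPolynomial (Fin n) k ⧸ I) P →
      ∀ (ρP : G →* (P ≃+ P))
        (hP : ∀ (g : G) (b : MvPolynomial (Fin n) k ⧸ I) (p : P),
          ρP g (b • p) = (ρB g b) • (ρP g p)),
        Module.Finite (fixedSubalgebra k (MvPolynomial (Fin n) k ⧸ I) ρB)
          (fixedSubmodule ρB ρP hP) :=
  ⟨finiteType_fixedSubalgebra ρB hG, fun _ _ _ _ ρP hP => finite_fixedSubmodule ρB ρP hP hG⟩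

/-- **Corollary 4.7** for a finite linearly reductive group: if a finite group `G` with `|G|`
invertible in `k` acts linearly on `k[x₁,…,xₙ]` and `I` is a `G`-stable ideal, then for the
quotient `B = k[x₁,…,xₙ]/I` with the induced action: (1) `Bᴳ` is a finitely generated
`k`-algebra, and (2) for every finitely generated `B`-module `P` with a compatible `G`-action,
`Pᴳ` is a finitely generated `Bᴳ`-module. -/
theorem stmt4 (k : Type u) [CommRing k]
    (G : Type u) [Group G] [Fintype G]
    (hG : IsUnit ((Fintype.card G : ℕ) : k))
    (n : ℕ)
    (ρ : G →* (MvPolynomial (Fin n) k ≃ₐ[k] MvPolynomial (Fin n) k))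
    (hgraded : ∀ (g : G) (d : ℕ), ∀ p ∈ MvPolynomial.homogeneousSubmodule (Fin n) k d,
      ρ g p ∈ MvPolynomial.homogeneousSubmodule (Fin n) k d)
    (I : Ideal (MvPolynomial (Fin n) k))
    (hI : ∀ (g : G), ∀ x ∈ I, ρ g x ∈ I)
    -- the induced action on `B = k[x₁,…,xₙ]/I`
    (ρB : G →* ((MvPolynomial (Fin n) k ⧸ I) ≃ₐ[k] (MvPolynomial (Fin n) k ⧸ I)))
    (hρB : ∀ (g : G) (p : MvPolynomial (Fin n) k),
      ρB g (Ideal.Quotient.mk I p) = Ideal.Quotient.mk I (ρ g p)) :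
    Algebra.FiniteType k (fixedSubalgebra k (MvPolynomial (Fin n) k ⧸ I) ρB) ∧
    ∀ (P : Type u) [AddCommGroup P] [Module (MvPolynomial (Fin n) k ⧸ I) P],
      Module.Finite (MvPolynomial (Fin n) k ⧸ I) P →
      ∀ (ρP : G →* (P ≃+ P))
        (hP : ∀ (g : G) (b : MvPolynomial (Fin n) k ⧸ I) (p : P),
          ρP g (b • p) = (ρB g b) • (ρP g p)),
        Module.Finite (fixedSubalgebra k (MvPolynomial (Fin n) k ⧸ I) ρB)
          (fixedSubmodule ρB ρP hP) :=
  stmt4_general k G hG n I ρB
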